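/- Fix a directed graph C and a phase space function 𝒫: C₀ → FinVect. Let φ: Γ → Γ' be an étale map of finite graphs over C and w ∈ 𝕍_FV(Γ'). Then ℙφ ∘ S_{Γ'}(w) = S_Γ(𝕍_FV(φ)w) ∘ ℙφ as linear maps ℙΓ'₀ → ℙΓ₀; i.e. ℙφ: (ℙΓ'₀, S_{Γ'}(w)) → (ℙΓ₀, S_Γ(𝕍_FV(φ)w)) is a map of linear dynamical systems. -/

import Mathlib

/-- A directed graph: a set of edges, a set of nodes, and source/target maps. -/
structure DGraph : Type 1 where
  V : Type
  E : Type
  s : E → V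
  t : E → V

/-- A map of directed graphs. -/
@[ext]
structure GraphMap (G G' : DGraph) where
  vMap : G.V → G'.V
  eMap : G.E → G'.E
  hs : ∀ e, G'.s (eMap e) = vMap (G.s e)
  ht : ∀ e, G'.t (eMap e) = vMap (G.t e)

namespace GraphMap

def id (G : DGraph) : GraphMap G G :=
  ⟨fun v => v, fun e => e, fun _ => rfl, fun _ => rfl⟩

def comp {G₁ G₂ G₃ : DGraph} (g : GraphMap G₂ G₃) (f : GraphMap G₁ G₂) :
    GraphMap G₁ G₃ where
  vMap v := g.vMap (f.vMap v)
  eMap e := g.eMap (f.eMap e)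
  hs e := by rw [g.hs, f.hs]
  ht e := by rw [g.ht, f.ht]

end GraphMap

/-- A graph colored by the graph `C`, i.e. a graph together with a map of graphs to `C`. -/
structure CGraph (C : DGraph) : Type 1 where
  gr : DGraph
  col : GraphMap gr C

/-- A map of graphs over `C`. -/
@[ext]
structure CMap {C : DGraph} (Γ Γ' : CGraph C) where
  toMap : GraphMap Γ.gr Γ'.gr
  hv : ∀ v, Γ'.col.vMap (toMap.vMap v) = Γ.col.vMap v
  he : ∀ e, Γ'.col.eMap (toMap.eMap e) = Γ.col.eMap e

namespace CMap

variable {C : DGraph}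

def id (Γ : CGraph C) : CMap Γ Γ := ⟨GraphMap.id _, fun _ => rfl, fun _ => rfl⟩

def comp {Γ₁ Γ₂ Γ₃ : CGraph C} (g : CMap Γ₂ Γ₃) (f : CMap Γ₁ Γ₂) : CMap Γ₁ Γ₃ where
  toMap := g.toMap.comp f.toMap
  hv v := by
    show Γ₃.col.vMap (g.toMap.vMap (f.toMap.vMap v)) = Γ₁.col.vMap v
    rw [g.hv, f.hv]
  he e := by
    show Γ₃.col.eMap (g.toMap.eMap (f.toMap.eMap e)) = Γ₁.col.eMap e
    rw [g.he, f.he]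

/-- A map of graphs over `C` is an isomorphism iff it is bijective on nodes and edges. -/
def IsIso {Γ Γ' : CGraph C} (φ : CMap Γ Γ') : Prop :=
  Function.Bijective φ.toMap.vMap ∧ Function.Bijective φ.toMap.eMap

theorem isIso_id (Γ : CGraph C) : (CMap.id Γ).IsIso :=
  ⟨Function.bijective_id, Function.bijective_id⟩

theorem IsIso.comp {Γ₁ Γ₂ Γ₃ : CGraph C} {g : CMap Γ₂ Γ₃} {f : CMap Γ₁ Γ₂}
    (hg : g.IsIso) (hf : f.IsIso) : (g.comp f).IsIso :=
  ⟨hg.1.comp hf.1, hg.2.comp hf.2⟩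

end CMap

variable {C : DGraph}

/-- The set of edges of `Γ` with target `a`; these are both the edges and the
leaves of the input tree `I(a)`. -/
abbrev inEdge (Γ : CGraph C) (a : Γ.gr.V) : Type := {e : Γ.gr.E // Γ.gr.t e = a}

/-- The input tree `I(a)` of a node `a` of a graph `Γ` over `C`, as a graph over `C`. -/
def inTree (Γ : CGraph C) (a : Γ.gr.V) : CGraph C where
  gr :=
    { V := Unit ⊕ inEdge Γ a
      E := inEdge Γ a
      s := Sum.inr
      t := fun _ => Sum.inl () }
  col :=
    { vMap := Sum.elim (fun _ => Γ.col.vMap a) (fun e => Γ.col.vMap (Γ.gr.s e.1))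
      eMap := fun e => Γ.col.eMap e.1
      hs := fun e => Γ.col.hs e.1
      ht := fun e => by
        show C.t (Γ.col.eMap e.1) = Γ.col.vMap a
        rw [Γ.col.ht e.1, e.2] }

/-- The edge map `I(a) → I(φ(a))` induced by a map `φ` of graphs over `C`. -/
def liftEdge {Γ Γ' : CGraph C} (φ : CMap Γ Γ') (a : Γ.gr.V) (e : inEdge Γ a) :
    inEdge Γ' (φ.toMap.vMap a) :=
  ⟨φ.toMap.eMap e.1, by rw [φ.toMap.ht, e.2]⟩

/-- The map of input trees `φ_a : I(a) → I(φ(a))` induced by a map `φ` of graphs over `C`. -/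
def inMap {Γ Γ' : CGraph C} (φ : CMap Γ Γ') (a : Γ.gr.V) :
    CMap (inTree Γ a) (inTree Γ' (φ.toMap.vMap a)) where
  toMap :=
    { vMap := Sum.elim (fun _ => Sum.inl ()) (fun e => Sum.inr (liftEdge φ a e))
      eMap := liftEdge φ a
      hs := fun _ => rfl
      ht := fun _ => rfl }
  hv v := by
    cases v with
    | inl u => exact φ.hv a
    | inr e =>
      show Γ'.col.vMap (Γ'.gr.s (φ.toMap.eMap e.1)) = Γ.col.vMap (Γ.gr.s e.1)
      rw [φ.toMap.hs, φ.hv]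
  he e := φ.he e.1

/-- A map of graphs over `C` is *étale* if the induced maps of input trees are all
isomorphisms of graphs over `C`. -/
def IsEtale {Γ Γ' : CGraph C} (φ : CMap Γ Γ') : Prop :=
  ∀ a : Γ.gr.V, (inMap φ a).IsIso

section TreeLemmas

variable {Γ Γ' : CGraph C} {a : Γ.gr.V} {b : Γ'.gr.V}

theorem CMap.vMap_inr (σ : CMap (inTree Γ a) (inTree Γ' b)) (e : inEdge Γ a) :
    σ.toMap.vMap (Sum.inr e) = Sum.inr (σ.toMap.eMap e) :=
  (σ.toMap.hs e).symm

/-- Maps of input trees preserve the colors of the sources of the leaves. -/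
theorem leafColor (σ : CMap (inTree Γ a) (inTree Γ' b)) (e : inEdge Γ a) :
    Γ'.col.vMap (Γ'.gr.s (σ.toMap.eMap e).1) = Γ.col.vMap (Γ.gr.s e.1) := by
  have h := σ.hv (Sum.inr e)
  rw [CMap.vMap_inr] at h
  exact h

/-- An isomorphism of input trees maps the root to the root. -/
theorem rootFixed (σ : CMap (inTree Γ a) (inTree Γ' b)) (hσ : σ.IsIso) :
    σ.toMap.vMap (Sum.inl ()) = Sum.inl () := by
  rcases h : σ.toMap.vMap (Sum.inl ()) with u | e'
  · cases u; rfl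
  · obtain ⟨e, rfl⟩ := hσ.2.2 e'
    have ht : (Sum.inl () : Unit ⊕ inEdge Γ' b) = σ.toMap.vMap (Sum.inl ()) := σ.toMap.ht e
    rw [h] at ht
    exact absurd ht Sum.inl_ne_inr

/-- An isomorphism of input trees preserves the color of the root. -/
theorem rootColor (σ : CMap (inTree Γ a) (inTree Γ' b)) (hσ : σ.IsIso) :
    Γ'.col.vMap b = Γ.col.vMap a := by
  have h := σ.hv (Sum.inl ())
  rw [rootFixed σ hσ] at h
  exact h

end TreeLemmas

/-! ### Phase spaces and linear control systems (the `FinVect` case) -/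

set_option linter.unusedSectionVars false

variable (P : C.V → Type)
variable [∀ c, AddCommGroup (P c)] [∀ c, Module ℝ (P c)]
  [∀ c, Module.Finite ℝ (P c)]

/-- Transport along an equality of colors. -/
def pcast {c c' : C.V} (h : c = c') : P c ≃ₗ[ℝ] P c' := by
  subst h; exact LinearEquiv.refl ℝ (P c)

/-- The linear map `ℙ f : ℙ X → ℙ Y` induced by a map `f : Y → X` of sets over the
set of colors. -/
def phasePull {X Y : Type} (α : X → C.V) (β : Y → C.V) (f : Y → X)
    (hc : ∀ y, α (f y) = β y) :
    (∀ x, P (α x)) →ₗ[ℝ] (∀ y, P (β y)) where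
  toFun v y := pcast P (hc y) (v (f y))
  map_add' u v := by funext y; simp
  map_smul' r v := by funext y; simp

/-- The phase space `ℙ(lv I(a))` of the leaves of the input tree of `a`. -/
abbrev LeafSpace (Γ : CGraph C) (a : Γ.gr.V) : Type :=
  ∀ e : inEdge Γ a, P (Γ.col.vMap (Γ.gr.s e.1))

/-- The space `Ctrl_FV(I(a))` of linear control systems associated to the input tree
of a node `a`: all linear maps from the phase space of the leaves to the phase space
of the root. -/
abbrev CtrlFV (Γ : CGraph C) (a : Γ.gr.V) : Type :=
  LeafSpace P Γ a →ₗ[ℝ] P (Γ.col.vMap a)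

/-- The map `ℙ(σ|_{lv}) : ℙ(lv I(b)) → ℙ(lv I(a))` induced by a map of input trees
`σ : I(a) → I(b)`. -/
def leafPull {Γ Γ' : CGraph C} {a : Γ.gr.V} {b : Γ'.gr.V}
    (σ : CMap (inTree Γ a) (inTree Γ' b)) :
    LeafSpace P Γ' b →ₗ[ℝ] LeafSpace P Γ a :=
  phasePull P (fun e' : inEdge Γ' b => Γ'.col.vMap (Γ'.gr.s e'.1))
    (fun e : inEdge Γ a => Γ.col.vMap (Γ.gr.s e.1)) σ.toMap.eMap (leafColor σ)

/-- The action `Ctrl_FV(σ) X = X ∘ ℙ(σ|_{lv})` of an isomorphism of input trees on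
linear control systems. -/
def ctrlMapFV {Γ Γ' : CGraph C} {a : Γ.gr.V} {b : Γ'.gr.V}
    (σ : CMap (inTree Γ a) (inTree Γ' b)) (hσ : σ.IsIso) :
    CtrlFV P Γ a →ₗ[ℝ] CtrlFV P Γ' b where
  toFun X := ((pcast P (rootColor σ hσ).symm).toLinearMap.comp X).comp (leafPull P σ)
  map_add' X Y := by
    simp only [LinearMap.comp_add, LinearMap.add_comp]
  map_smul' r X := by
    simp only [LinearMap.comp_smul, LinearMap.smul_comp, RingHom.id_apply]

/-- The space of virtual groupoid-invariant linear vector fields on a finite graph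
over `C`. -/
def VSpaceFV (Γ : CGraph C) : Submodule ℝ (∀ a : Γ.gr.V, CtrlFV P Γ a) where
  carrier := {X | ∀ (a b : Γ.gr.V) (σ : CMap (inTree Γ a) (inTree Γ b)) (hσ : σ.IsIso),
    ctrlMapFV P σ hσ (X a) = X b}
  add_mem' := fun hX hY a b σ hσ => by
    simp only [Set.mem_setOf_eq] at *
    simp only [Pi.add_apply, map_add]
    rw [hX a b σ hσ, hY a b σ hσ]
  zero_mem' := fun a b σ hσ => by simp
  smul_mem' := fun r X hX a b σ hσ => by
    simp only [Set.mem_setOf_eq] at *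
    simp only [Pi.smul_apply, map_smul]
    rw [hX a b σ hσ]

/-- The canonical projection `ϖ_a : 𝕍_FV(Γ) → Ctrl_FV(I(a))`. -/
def VprojFV (Γ : CGraph C) (a : Γ.gr.V) :
    ↥(VSpaceFV P Γ) →ₗ[ℝ] CtrlFV P Γ a :=
  (LinearMap.proj a).comp (VSpaceFV P Γ).subtype

/-- The total phase space `ℙ Γ₀` of a graph over `C`. -/
abbrev TotalPhase (Γ : CGraph C) : Type := ∀ a : Γ.gr.V, P (Γ.col.vMap a)

/-- The map `ℙ(ξ|_{lv I(a)}) : ℙ Γ₀ → ℙ lv I(a)` induced by the canonical map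
`ξ : I(a) → Γ`. -/
def leafRestrict (Γ : CGraph C) (a : Γ.gr.V) :
    TotalPhase P Γ →ₗ[ℝ] LeafSpace P Γ a :=
  phasePull P Γ.col.vMap (fun e : inEdge Γ a => Γ.col.vMap (Γ.gr.s e.1))
    (fun e : inEdge Γ a => Γ.gr.s e.1) (fun _ => rfl)

/-- The map `ℙ φ : ℙ Γ'₀ → ℙ Γ₀` on total phase spaces induced by a map
`φ : Γ → Γ'` of graphs over `C`. -/
def totalPull {Γ Γ' : CGraph C} (φ : CMap Γ Γ') :
    TotalPhase P Γ' →ₗ[ℝ] TotalPhase P Γ :=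
  phasePull P Γ'.col.vMap Γ.col.vMap φ.toMap.vMap φ.hv

/-- The map `S_Γ` sending a virtual groupoid-invariant linear vector field to an
actual linear vector field on `ℙ Γ₀`; its component at `a` is
`ϖ_a(v) ∘ ℙ(ξ|_{lv I(a)})`. -/
def SMapFV (Γ : CGraph C) :
    ↥(VSpaceFV P Γ) →ₗ[ℝ] (TotalPhase P Γ →ₗ[ℝ] TotalPhase P Γ) where
  toFun v := LinearMap.pi (fun a => (v.1 a).comp (leafRestrict P Γ a))
  map_add' u v := by
    apply LinearMap.ext
    intro x
    funext a
    simp [LinearMap.pi_apply]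
  map_smul' r v := by
    apply LinearMap.ext
    intro x
    funext a
    simp [LinearMap.pi_apply]

/-!
At a node `a`, both sides are `w_{φ(a)}` evaluated on the states of the input leaves of `φ(a)`.
Since `φ` sends the input edges of `a` to those of `φ(a)` compatibly with sources, functoriality
of `ℙ` makes restriction to the input leaves commute with `ℙφ`; the defining relation of `v`
then transports `w_{φ(a)}` back along `φ_a`, and the two colour transports cancel.
-/

section

variable (P : C.V → Type) [∀ c, AddCommGroup (P c)] [∀ c, Module ℝ (P c)]

theorem pcast_pcast {c c' c'' : C.V} (h : c = c') (h' : c' = c'') (u : P c) :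
    pcast P h' (pcast P h u) = pcast P (h.trans h') u := by
  subst h h'; rfl

@[simp]
theorem pcast_rfl {c : C.V} (u : P c) : pcast P rfl u = u := rfl

theorem phasePull_congr {X Y : Type} (α : X → C.V) (β : Y → C.V) {f f' : Y → X}
    (hff' : f = f') (hf : ∀ y, α (f y) = β y) (hf' : ∀ y, α (f' y) = β y) :
    phasePull P α β f hf = phasePull P α β f' hf' := by
  subst hff'; rfl

theorem phasePull_comp_phasePull {X Y Z : Type} (α : X → C.V) (β : Y → C.V) (γ : Z → C.V)
    (f : Y → X) (g : Z → Y) (hf : ∀ y, α (f y) = β y) (hg : ∀ z, β (g z) = γ z) :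
    (phasePull P β γ g hg).comp (phasePull P α β f hf) =
      phasePull P α γ (f ∘ g) (fun z => (hf (g z)).trans (hg z)) :=
  LinearMap.ext fun v => funext fun z => pcast_pcast P (hf (g z)) (hg z) (v (f (g z)))

theorem leafPull_inMap_comp_leafRestrict {Γ Γ' : CGraph C} (φ : CMap Γ Γ') (a : Γ.gr.V) :
    (leafPull P (inMap φ a)).comp (leafRestrict P Γ' (φ.toMap.vMap a)) =
      (leafRestrict P Γ a).comp (totalPull P φ) := by
  refine (phasePull_comp_phasePull P _ _ _ _ _ _ _).trans ?_
  refine (phasePull_congr P _ _ ?_ _ _).trans (phasePull_comp_phasePull P _ _ _ _ _ _ _).symm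
  exact funext fun e => φ.toMap.hs e.1

theorem SMapFV_apply (Γ : CGraph C) (v : ↥(VSpaceFV P Γ)) (x : TotalPhase P Γ)
    (a : Γ.gr.V) : SMapFV P Γ v x a = VprojFV P Γ a v (leafRestrict P Γ a x) := rfl

theorem ctrlMapFV_apply {Γ Γ' : CGraph C} {a : Γ.gr.V} {b : Γ'.gr.V}
    (σ : CMap (inTree Γ a) (inTree Γ' b)) (hσ : σ.IsIso) (X : CtrlFV P Γ a)
    (y : LeafSpace P Γ' b) :
    ctrlMapFV P σ hσ X y = pcast P (rootColor σ hσ).symm (X (leafPull P σ y)) := rfl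

end

/-- `v` stands for `𝕍_FV(φ)w`, which `hv` pins down by
`ϖ_a(v) = Ctrl_FV(φ_a)⁻¹(ϖ_{φ(a)}(w))`. -/
theorem Pmap_relates_linear_groupoid_invariant_vector_fields_general {C : DGraph}
    (P : C.V → Type)
    [∀ c, AddCommGroup (P c)] [∀ c, Module ℝ (P c)]
    {Γ Γ' : CGraph C}
    (φ : CMap Γ Γ') (hφ : IsEtale φ)
    (w : ↥(VSpaceFV P Γ')) (v : ↥(VSpaceFV P Γ))
    (hv : ∀ a : Γ.gr.V,
      ctrlMapFV P (inMap φ a) (hφ a) (VprojFV P Γ a v) =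
        VprojFV P Γ' (φ.toMap.vMap a) w) :
    (totalPull P φ).comp (SMapFV P Γ' w) = (SMapFV P Γ v).comp (totalPull P φ) := by
  refine LinearMap.ext fun x => funext fun a => ?_
  set y := leafRestrict P Γ' (φ.toMap.vMap a) x
  calc totalPull P φ (SMapFV P Γ' w x) a
      = pcast P (φ.hv a) (VprojFV P Γ' (φ.toMap.vMap a) w y) := rfl
    _ = VprojFV P Γ a v (leafPull P (inMap φ a) y) := by
      rw [← hv a, ctrlMapFV_apply, pcast_pcast, pcast_rfl]
    _ = SMapFV P Γ v (totalPull P φ x) a := by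
      rw [SMapFV_apply, ← LinearMap.comp_apply (leafPull P _), leafPull_inMap_comp_leafRestrict,
        LinearMap.comp_apply]

/-- **Statement 7.** Let `φ : Γ → Γ'` be an étale map of finite graphs over `C` and
`w ∈ 𝕍_FV(Γ')`.  Then `ℙφ ∘ S_{Γ'}(w) = S_Γ(𝕍_FV(φ)w) ∘ ℙφ` as linear maps
`ℙΓ'₀ → ℙΓ₀`; i.e. `ℙφ` is a map of linear dynamical systems.  Here `v = 𝕍_FV(φ)w`
is characterized by `ϖ_a(v) = Ctrl_FV(φ_a)⁻¹(ϖ_{φ(a)}(w))` for all nodes `a`. -/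
theorem Pmap_relates_linear_groupoid_invariant_vector_fields {C : DGraph}
    (P : C.V → Type)
    [∀ c, AddCommGroup (P c)] [∀ c, Module ℝ (P c)] [∀ c, Module.Finite ℝ (P c)]
    {Γ Γ' : CGraph C} [Fintype Γ.gr.E] [Fintype Γ'.gr.E]
    [Fintype Γ.gr.V] [Fintype Γ'.gr.V]
    (φ : CMap Γ Γ') (hφ : IsEtale φ)
    (w : ↥(VSpaceFV P Γ')) (v : ↥(VSpaceFV P Γ))
    (hv : ∀ a : Γ.gr.V,
      ctrlMapFV P (inMap φ a) (hφ a) (VprojFV P Γ a v) =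
        VprojFV P Γ' (φ.toMap.vMap a) w) :
    (totalPull P φ).comp (SMapFV P Γ' w) = (SMapFV P Γ v).comp (totalPull P φ) :=
  Pmap_relates_linear_groupoid_invariant_vector_fields_general P φ hφ w v hv
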